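/- Let s : E × F → ℝ be twice continuously differentiable and μ-strongly convex in its first argument for each fixed x (μ > 0), let y* : F → E be differentiable with ∇_y s(y*(x), x) = 0 for all x, and let θ : F × E → ℝ be continuously differentiable. Define Φ : F → ℝ by Φ(x) := θ(x, y*(x)). Then Φ is differentiable and its gradient (the hyper-gradient) is given by ∇Φ(x) = ∇_x θ(x, y*(x)) − (∂_x(∇_y s)(y*(x), x))* ∘ (∇²_{yy} s(y*(x), x))⁻¹ (∇_y θ(x, y*(x))), where (·)* denotes the adjoint of a linear map and the inverse exists because ∇²_{yy} s(y*(x), x) ⪰ μ·I. -/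

import Mathlib

open InnerProductSpace ContinuousLinearMap Set
open scoped RealInnerProductSpace

/-! Strong convexity makes the partial Hessian `H = ∇²_{yy} s (y*(x), x)` coercive, hence
invertible by Lax–Milgram, and it is self-adjoint by the symmetry of second derivatives.
Differentiating the optimality condition `∇_y s (y*(x'), x') = 0` along the graph of `y*` gives
`H ∘ Dy*(x) + ∂ₓ(∇_y s) = 0`, so `(Dy*(x))* = -(∂ₓ(∇_y s))* ∘ H⁻¹`, and the chain rule
`∇Φ = ∇ₓθ + (Dy*(x))* ∇_y θ` turns this into the hyper-gradient formula. -/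

section PartialDerivatives

variable {𝕜 : Type*} [NontriviallyNormedField 𝕜] {E F G : Type*}
  [NormedAddCommGroup E] [NormedSpace 𝕜 E] [NormedAddCommGroup F] [NormedSpace 𝕜 F]
  [NormedAddCommGroup G] [NormedSpace 𝕜 G]

theorem hasFDerivAt_comp_graph {f : F × E → G} {φ : F → E} {x : F}
    (hf : DifferentiableAt 𝕜 f (x, φ x)) (hφ : DifferentiableAt 𝕜 φ x) :
    HasFDerivAt (fun x' => f (x', φ x'))
      (fderiv 𝕜 (fun x' => f (x', φ x)) x + (fderiv 𝕜 (fun y => f (x, y)) (φ x)).comp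
        (fderiv 𝕜 φ x)) x := by
  have hfx : HasFDerivAt (fun x' => f (x', φ x)) ((fderiv 𝕜 f (x, φ x)).comp (inl 𝕜 F E)) x :=
    hf.hasFDerivAt.comp x (hasFDerivAt_prodMk_left x (φ x))
  have hfy : HasFDerivAt (fun y => f (x, y)) ((fderiv 𝕜 f (x, φ x)).comp (inr 𝕜 F E)) (φ x) :=
    hf.hasFDerivAt.comp (φ x) (hasFDerivAt_prodMk_right x (φ x))
  have hgraph := hf.hasFDerivAt.comp x ((hasFDerivAt_id x).prodMk hφ.hasFDerivAt)
  rw [hfx.fderiv, hfy.fderiv]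
  refine hgraph.congr_fderiv ?_
  ext v
  simp [← map_add]

end PartialDerivatives

section Gradient

variable {E F : Type*} [NormedAddCommGroup E] [InnerProductSpace ℝ E] [CompleteSpace E]
  [NormedAddCommGroup F] [InnerProductSpace ℝ F] [CompleteSpace F]

theorem gradient_comp_graph {θ : F × E → ℝ} {φ : F → E} {x : F}
    (hθ : DifferentiableAt ℝ θ (x, φ x)) (hφ : DifferentiableAt ℝ φ x) :
    gradient (fun x' => θ (x', φ x')) x
      = gradient (fun x' => θ (x', φ x)) x
        + adjoint (fderiv ℝ φ x) (gradient (fun y => θ (x, y)) (φ x)) := by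
  refine ext_inner_right ℝ fun v => ?_
  rw [inner_add_left, adjoint_inner_left, inner_gradient_left, inner_gradient_left,
    inner_gradient_left, (hasFDerivAt_comp_graph hθ hφ).fderiv]
  rfl

end Gradient

section Hessian

variable {E : Type*} [NormedAddCommGroup E] [InnerProductSpace ℝ E] [CompleteSpace E]

theorem contDiff_gradient {n : WithTop ℕ∞} {g : E → ℝ} (hg : ContDiff ℝ (n + 1) g) :
    ContDiff ℝ n (gradient g) :=
  (toDual ℝ E).symm.contDiff.comp (hg.fderiv_right le_rfl)

theorem inner_fderiv_gradient_apply {g : E → ℝ} {y : E}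
    (hg : DifferentiableAt ℝ (fderiv ℝ g) y) (u w : E) :
    ⟪fderiv ℝ (gradient g) y u, w⟫ = fderiv ℝ (fderiv ℝ g) y u w := by
  have hgrad := (toDual ℝ E).symm.toContinuousLinearEquiv.hasFDerivAt.comp y hg.hasFDerivAt
  rw [show fderiv ℝ (gradient g) y = _ from hgrad.fderiv]
  exact toDual_symm_apply

theorem isSelfAdjoint_fderiv_gradient {g : E → ℝ} {y : E} (hg : ContDiffAt ℝ 2 g y) :
    IsSelfAdjoint (fderiv ℝ (gradient g) y) := by
  have hdiff : DifferentiableAt ℝ (fderiv ℝ g) y :=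
    (hg.fderiv_right (m := 1) le_rfl).differentiableAt one_ne_zero
  rw [isSelfAdjoint_iff_isSymmetric]
  intro u w
  rw [coe_coe, inner_fderiv_gradient_apply hdiff, real_inner_comm,
    inner_fderiv_gradient_apply hdiff]
  exact hg.isSymmSndFDerivAt (by simp) u w

theorem mul_norm_sq_le_inner_fderiv_gradient {g : E → ℝ} {μ : ℝ} (hg : ContDiff ℝ 2 g)
    (hconv : ConvexOn ℝ univ fun y => g y - μ / 2 * ‖y‖ ^ 2) (y v : E) :
    μ * ‖v‖ ^ 2 ≤ ⟪fderiv ℝ (gradient g) y v, v⟫ := by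
  set l : ℝ →ᵃ[ℝ] E := AffineMap.lineMap y (y + v)
  have hl : ∀ t, HasDerivAt l v t := fun t => by
    simpa using AffineMap.hasDerivAt_lineMap (a := y) (b := y + v) (x := t)
  set ψ : ℝ → ℝ := fun t => ⟪gradient g (l t), v⟫ - μ * ⟪l t, v⟫
  have hφ : ∀ t, HasDerivAt (fun t => g (l t) - μ / 2 * ‖l t‖ ^ 2) (ψ t) t := fun t => by
    have hg_l := (hg.differentiable (by norm_num) (l t)).hasFDerivAt.comp_hasDerivAt t (hl t)
    refine (hg_l.sub ((hl t).norm_sq.const_mul (μ / 2))).congr_deriv ?_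
    simp only [ψ, inner_gradient_left]
    ring
  have hψ_mono : Monotone ψ := by
    have hconv_l : ConvexOn ℝ univ fun t => g (l t) - μ / 2 * ‖l t‖ ^ 2 :=
      hconv.comp_affineMap l
    have hmono := hconv_l.monotoneOn_deriv fun t _ => (hφ t).differentiableAt
    rwa [monotoneOn_univ, funext fun t => (hφ t).deriv] at hmono
  have hψ_deriv : HasDerivAt ψ (⟪fderiv ℝ (gradient g) y v, v⟫ - μ * ⟪v, v⟫) 0 := by
    have hgrad_l : HasDerivAt (fun t => gradient g (l t)) (fderiv ℝ (gradient g) y v) 0 := by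
      have hl0 : l 0 = y := by simp [l]
      have hgrad := (contDiff_gradient (n := 1) hg).differentiable one_ne_zero (l 0)
      rw [← hl0]
      exact hgrad.hasFDerivAt.comp_hasDerivAt 0 (hl 0)
    have hlin := (hl 0).inner ℝ (hasDerivAt_const 0 v)
    refine ((hgrad_l.inner ℝ (hasDerivAt_const 0 v)).sub (hlin.const_mul μ)).congr_deriv ?_
    simp only [inner_zero_right, zero_add]
  have h0 := hψ_deriv.nonneg_of_monotone hψ_mono
  rw [real_inner_self_eq_norm_sq] at h0
  linarith

theorem contDiff_gradient_partial_fst {F : Type*} [NormedAddCommGroup F] [NormedSpace ℝ F]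
    {n : WithTop ℕ∞} {s : E × F → ℝ} (hs : ContDiff ℝ (n + 1) s) :
    ContDiff ℝ n fun p : F × E => gradient (fun y => s (y, p.1)) p.2 := by
  have hpartial : ∀ p : F × E, gradient (fun y => s (y, p.1)) p.2
      = (toDual ℝ E).symm ((fderiv ℝ s (p.2, p.1)).comp (inl ℝ E F)) := fun p => by
    have h := ((hs.differentiable (by simp)) _).hasFDerivAt.comp p.2
      (hasFDerivAt_prodMk_left (𝕜 := ℝ) p.2 p.1)
    exact congrArg _ h.fderiv
  rw [funext hpartial]
  exact (toDual ℝ E).symm.contDiff.comp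
    ((((compL ℝ E (E × F) ℝ).flip (inl ℝ E F)).contDiff.comp (hs.fderiv_right le_rfl)).comp
      (contDiff_snd.prodMk contDiff_fst))

end Hessian

theorem exists_continuousLinearEquiv_of_coercive {E : Type*} [NormedAddCommGroup E]
    [InnerProductSpace ℝ E] [CompleteSpace E] {H : E →L[ℝ] E} {μ : ℝ} (hμ : 0 < μ)
    (hH : ∀ v, μ * ‖v‖ ^ 2 ≤ ⟪H v, v⟫) : ∃ e : E ≃L[ℝ] E, (e : E →L[ℝ] E) = H := by
  have hcoercive : IsCoercive ((innerSL ℝ).comp H) :=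
    ⟨μ, hμ, fun v => by simpa [sq, mul_assoc] using hH v⟩
  refine ⟨hcoercive.continuousLinearEquivOfBilin, ext fun v => ext_inner_right ℝ fun w => ?_⟩
  simp [hcoercive.continuousLinearEquivOfBilin_apply]

theorem adjoint_eq_neg_adjoint_comp_of_comp_add_eq_zero {E F : Type*} [NormedAddCommGroup E]
    [InnerProductSpace ℝ E] [CompleteSpace E] [NormedAddCommGroup F] [InnerProductSpace ℝ F]
    [CompleteSpace F] {H H' : E →L[ℝ] E} {D A : F →L[ℝ] E} (hH : IsSelfAdjoint H)
    (hH' : H.comp H' = ContinuousLinearMap.id ℝ E) (hDA : H.comp D + A = 0) :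
    adjoint D = -(adjoint A).comp H' := by
  have hA : adjoint A = -(adjoint D).comp H := by
    rw [eq_neg_of_add_eq_zero_right hDA, map_neg, adjoint_comp, hH.adjoint_eq]
  rw [hA, neg_comp, neg_neg, comp_assoc, hH', comp_id]

/-- Hyper-gradient formula (Lemma 4): `Φ(x) := θ(x, y*(x))` is differentiable and
`∇Φ(x) = ∇ₓθ(x, y*(x)) − (∂ₓ(∇_y s)(y*(x), x))* ∘ (∇²_{yy} s(y*(x), x))⁻¹ (∇_y θ(x, y*(x)))`. -/
theorem stmt2
    {E F : Type*} [NormedAddCommGroup E] [InnerProductSpace ℝ E] [FiniteDimensional ℝ E]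
    [NormedAddCommGroup F] [InnerProductSpace ℝ F] [FiniteDimensional ℝ F]
    (s : E × F → ℝ) (μ : ℝ) (hμ : 0 < μ)
    (hs : ContDiff ℝ 2 s)
    (hconv : ∀ x : F, ConvexOn ℝ Set.univ (fun y : E => s (y, x) - μ / 2 * ‖y‖ ^ 2))
    (ystar : F → E) (hy : Differentiable ℝ ystar)
    (hopt : ∀ x : F, gradient (fun y => s (y, x)) (ystar x) = 0)
    (θ : F × E → ℝ) (hθ : ContDiff ℝ 1 θ) (x : F) :
    ∃ Hinv : E →L[ℝ] E,
      (fderiv ℝ (fun y => gradient (fun y' => s (y', x)) y) (ystar x)).comp Hinv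
          = ContinuousLinearMap.id ℝ E ∧
      Hinv.comp (fderiv ℝ (fun y => gradient (fun y' => s (y', x)) y) (ystar x))
          = ContinuousLinearMap.id ℝ E ∧
      DifferentiableAt ℝ (fun x' => θ (x', ystar x')) x ∧
      gradient (fun x' => θ (x', ystar x')) x
        = gradient (fun x' => θ (x', ystar x)) x
          - (ContinuousLinearMap.adjoint
              (fderiv ℝ (fun x' => gradient (fun y' => s (y', x')) (ystar x)) x))
            (Hinv (gradient (fun y => θ (x, y)) (ystar x))) := by
  set H := fderiv ℝ (fun y => gradient (fun y' => s (y', x)) y) (ystar x)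
  have hs_x : ContDiff ℝ 2 fun y => s (y, x) := hs.comp (contDiff_id.prodMk contDiff_const)
  obtain ⟨e, he⟩ : ∃ e : E ≃L[ℝ] E, (e : E →L[ℝ] E) = H :=
    exists_continuousLinearEquiv_of_coercive hμ
      (mul_norm_sq_le_inner_fderiv_gradient hs_x (hconv x) (ystar x))
  have hθ_diff : DifferentiableAt ℝ θ (x, ystar x) := hθ.differentiable one_ne_zero _
  have hgrad_s : DifferentiableAt ℝ (fun p : F × E => gradient (fun y => s (y, p.1)) p.2)
      (x, ystar x) := (contDiff_gradient_partial_fst (n := 1) hs).differentiable one_ne_zero _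
  have himplicit : H.comp (fderiv ℝ ystar x)
      + fderiv ℝ (fun x' => gradient (fun y' => s (y', x')) (ystar x)) x = 0 := by
    have hgraph := hasFDerivAt_comp_graph hgrad_s (hy x)
    simp only [hopt] at hgraph
    rw [add_comm]
    exact (hasFDerivAt_const 0 x).unique hgraph |>.symm
  refine ⟨e.symm, he ▸ e.coe_comp_coe_symm, he ▸ e.coe_symm_comp_coe,
    (hasFDerivAt_comp_graph hθ_diff (hy x)).differentiableAt, ?_⟩
  rw [gradient_comp_graph hθ_diff (hy x), adjoint_eq_neg_adjoint_comp_of_comp_add_eq_zero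
    (isSelfAdjoint_fderiv_gradient hs_x.contDiffAt) (he ▸ e.coe_comp_coe_symm) himplicit]
  simp [sub_eq_add_neg]
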